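/- Let V be a Bogoliubov operator with -ind V < ∞ and V₁₂ arbitrary, set S_V := V*P₁V and let E_V be the orthogonal projection onto ker(S_V S̄_V). Then S_V commutes with E_V, S_V E_V is a partial basis projection (i.e. an orthogonal projection q with q q̄ = 0), and the codimension of S_V E_V, namely dim ker(S_V E_V + conj(S_V E_V)), equals -ind V - 2·dim(P₁(K) ∩ ker V*). -/

import Mathlib

open ContinuousLinearMap


/-- `T` is a Hilbert–Schmidt operator. -/
def IsHS {K : Type*} [NormedAddCommGroup K] [InnerProductSpace ℂ K]
    (T : K →L[ℂ] K) : Prop :=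
  ∃ (ι : Type) (b : HilbertBasis ι ℂ K), Summable fun i => ‖T (b i)‖ ^ 2

/-- The conjugate operator `Ā = J A J` of `A` with respect to the conjugation `J`. -/
noncomputable def conjOp {K : Type*} [NormedAddCommGroup K] [InnerProductSpace ℂ K]
    (J : K ≃ₗᵢ⋆[ℂ] K) (A : K →L[ℂ] K) : K →L[ℂ] K :=
  LinearMap.mkContinuous
    { toFun := fun f => J (A (J f))
      map_add' := by intro x y; simp
      map_smul' := by intro c x; simp [map_smulₛₗ] }
    ‖A‖ fun f => by
      calc ‖J (A (J f))‖ = ‖A (J f)‖ := J.norm_map _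
        _ ≤ ‖A‖ * ‖J f‖ := A.le_opNorm _
        _ = ‖A‖ * ‖f‖ := by rw [J.norm_map]

open scoped ComplexInnerProductSpace

section helpers
variable {K : Type*} [NormedAddCommGroup K] [InnerProductSpace ℂ K]
variable (J : K ≃ₗᵢ⋆[ℂ] K)

lemma conjOp_apply (A : K →L[ℂ] K) (x : K) : conjOp J A x = J (A (J x)) := rfl

lemma conjOp_mul (hJ : ∀ f, J (J f) = f) (A B : K →L[ℂ] K) :
    conjOp J (A * B) = conjOp J A * conjOp J B := by
  ext x; simp [conjOp_apply, ContinuousLinearMap.mul_apply, hJ]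

lemma conjOp_conjOp (hJ : ∀ f, J (J f) = f) (A : K →L[ℂ] K) : conjOp J (conjOp J A) = A := by
  ext x; simp [conjOp_apply, hJ]

lemma conj_inner (x y : K) : ⟪J x, J y⟫ = (starRingEnd ℂ) ⟪x, y⟫ := by
  have e1 : J x + J y = J (x + y) := (map_add J x y).symm
  have e2 : J x - J y = J (x - y) := (map_sub J x y).symm
  have e3 : J (x + (RCLike.I : ℂ) • y) = J x - (RCLike.I : ℂ) • J y := by
    rw [map_add, map_smulₛₗ, RCLike.conj_I, neg_smul, ← sub_eq_add_neg]
  have e4 : J (x - (RCLike.I : ℂ) • y) = J x + (RCLike.I : ℂ) • J y := by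
    rw [map_sub, map_smulₛₗ, RCLike.conj_I, neg_smul, sub_neg_eq_add]
  apply RCLike.ext
  · rw [RCLike.conj_re,
      re_inner_eq_norm_add_mul_self_sub_norm_sub_mul_self_div_four,
      re_inner_eq_norm_add_mul_self_sub_norm_sub_mul_self_div_four,
      e1, e2, J.norm_map, J.norm_map]
  · rw [RCLike.conj_im,
      im_inner_eq_norm_sub_i_smul_mul_self_sub_norm_add_i_smul_mul_self_div_four,
      im_inner_eq_norm_sub_i_smul_mul_self_sub_norm_add_i_smul_mul_self_div_four,
      ← e3, ← e4, J.norm_map, J.norm_map]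
    ring

lemma inner_J_left (hJ : ∀ f, J (J f) = f) (u v : K) : ⟪J u, v⟫ = ⟪J v, u⟫ := by
  conv_lhs => rw [← hJ v]
  rw [conj_inner, inner_conj_symm]

variable [CompleteSpace K]

lemma conjOp_adjoint (hJ : ∀ f, J (J f) = f) (A : K →L[ℂ] K) :
    adjoint (conjOp J A) = conjOp J (adjoint A) := by
  symm
  rw [eq_adjoint_iff]
  intro x y
  rw [conjOp_apply, conjOp_apply, inner_J_left J hJ, adjoint_inner_right,
    ← inner_conj_symm, inner_J_left J hJ, inner_conj_symm]

lemma ker_eq_ortho {A : K →L[ℂ] K} (hsa : adjoint A = A) :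
    LinearMap.ker (A : K →ₗ[ℂ] K) = (LinearMap.range (A : K →ₗ[ℂ] K))ᗮ := by
  ext x
  simp only [LinearMap.mem_ker, Submodule.mem_orthogonal]
  constructor
  · intro hx u hu
    obtain ⟨z, rfl⟩ := hu
    show ⟪A z, x⟫ = 0
    calc ⟪A z, x⟫ = ⟪adjoint A z, x⟫ := by rw [hsa]
      _ = ⟪z, A x⟫ := adjoint_inner_left A x z
      _ = 0 := by rw [show A x = 0 from hx, inner_zero_right]
  · intro h
    have h2 : A (A x) ∈ LinearMap.range (A : K →ₗ[ℂ] K) := LinearMap.mem_range_self _ _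
    have h1 : ⟪A x, A x⟫ = 0 := by
      calc ⟪A x, A x⟫ = ⟪adjoint A (A x), x⟫ := (adjoint_inner_left A x (A x)).symm
        _ = ⟪A (A x), x⟫ := by rw [hsa]
        _ = 0 := h (A (A x)) h2
    exact inner_self_eq_zero.mp h1

end helpers

section helpers2
variable {K : Type*} [NormedAddCommGroup K] [InnerProductSpace ℂ K]
variable (J : K ≃ₗᵢ⋆[ℂ] K)

lemma conjOp_sub (A B : K →L[ℂ] K) :
    conjOp J (A - B) = conjOp J A - conjOp J B := by
  ext x; simp [conjOp_apply]

lemma conjOp_one' (hJ : ∀ f, J (J f) = f) : conjOp J (1 : K →L[ℂ] K) = 1 := by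
  ext x; simp [conjOp_apply, hJ]

variable [CompleteSpace K]

lemma finrank_map_eq (B : K →L[ℂ] K) (p : Submodule ℂ K) [FiniteDimensional ℂ p]
    (hinj : ∀ x ∈ p, B x = 0 → x = 0) :
    Module.finrank ℂ (p.map (B : K →ₗ[ℂ] K)) = Module.finrank ℂ p := by
  set f : p →ₗ[ℂ] K := (B : K →ₗ[ℂ] K).comp p.subtype with hf
  have hker : LinearMap.ker f = ⊥ := by
    rw [LinearMap.ker_eq_bot']
    intro m hm
    have : (m : K) = 0 := hinj m m.2 hm
    exact Subtype.ext this
  have hrange : LinearMap.range f = p.map (B : K →ₗ[ℂ] K) := by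
    rw [hf, LinearMap.range_comp, Submodule.range_subtype]
  have h := LinearMap.finrank_range_add_finrank_ker f
  rw [hker, hrange] at h
  simpa using h

lemma finrank_range_star_le (C : K →L[ℂ] K)
    [FiniteDimensional ℂ ↥(LinearMap.range (C : K →ₗ[ℂ] K))]
    [FiniteDimensional ℂ ↥(LinearMap.range ((star C : K →L[ℂ] K) : K →ₗ[ℂ] K))] :
    Module.finrank ℂ ↥(LinearMap.range ((star C : K →L[ℂ] K) : K →ₗ[ℂ] K)) ≤ Module.finrank ℂ ↥(LinearMap.range (C : K →ₗ[ℂ] K)) := by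
  have hinj : ∀ x ∈ LinearMap.range ((star C : K →L[ℂ] K) : K →ₗ[ℂ] K), C x = 0 → x = 0 := by
    rintro x ⟨y, rfl⟩ hx
    show (star C) y = 0
    have h1 : ⟪(star C) y, (star C) y⟫ = 0 := by
      calc ⟪(star C) y, (star C) y⟫ = ⟪adjoint C y, (star C) y⟫ := by rw [star_eq_adjoint]
        _ = ⟪y, C ((star C) y)⟫ := adjoint_inner_left C ((star C) y) y
        _ = 0 := by
            have : C ((star C) y) = 0 := hx
            rw [this, inner_zero_right]
    exact inner_self_eq_zero.mp h1
  calc Module.finrank ℂ ↥(LinearMap.range ((star C : K →L[ℂ] K) : K →ₗ[ℂ] K))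
      = Module.finrank ℂ ↥((LinearMap.range ((star C : K →L[ℂ] K) : K →ₗ[ℂ] K)).map (C : K →ₗ[ℂ] K)) :=
        (finrank_map_eq C _ hinj).symm
    _ ≤ Module.finrank ℂ ↥(LinearMap.range (C : K →ₗ[ℂ] K)) :=
        Submodule.finrank_mono LinearMap.map_le_range

end helpers2

set_option maxHeartbeats 2000000 in
/-- For `V` with `-ind V < ∞`, `S_V = V*P₁V` and `E_V` the orthogonal projection onto
`ker (S_V S̄_V)`: `S_V` commutes with `E_V`, `S_V E_V` is a partial basis projection
(idempotent, self-adjoint, `q q̄ = 0`), and its codimension `dim ker (q + q̄)` equals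
`-ind V - 2 dim (P₁(K) ∩ ker V*)`. -/
theorem stmt10 {K : Type*} [NormedAddCommGroup K] [InnerProductSpace ℂ K] [CompleteSpace K]
    (J : K ≃ₗᵢ⋆[ℂ] K) (hJ : ∀ f, J (J f) = f)
    (P₁ : K →L[ℂ] K) (hPsa : IsSelfAdjoint P₁) (hPidem : P₁ ∘L P₁ = P₁)
    (hPconj : conjOp J P₁ = 1 - P₁)
    (V : K →L[ℂ] K) (hV : adjoint V ∘L V = 1) (hVconj : conjOp J V = V)
    (hfin : FiniteDimensional ℂ ↥(LinearMap.ker (adjoint V : K →ₗ[ℂ] K)))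
    (E : K →L[ℂ] K) (hEsa : IsSelfAdjoint E) (hEidem : E ∘L E = E)
    (hEran : LinearMap.range (E : K →ₗ[ℂ] K) =
      LinearMap.ker (((adjoint V ∘L P₁ ∘L V) ∘L conjOp J (adjoint V ∘L P₁ ∘L V) : K →L[ℂ] K) : K →ₗ[ℂ] K)) :
    (adjoint V ∘L P₁ ∘L V) ∘L E = E ∘L (adjoint V ∘L P₁ ∘L V) ∧
      ((adjoint V ∘L P₁ ∘L V) ∘L E) ∘L ((adjoint V ∘L P₁ ∘L V) ∘L E) =
        (adjoint V ∘L P₁ ∘L V) ∘L E ∧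
      IsSelfAdjoint ((adjoint V ∘L P₁ ∘L V) ∘L E) ∧
      ((adjoint V ∘L P₁ ∘L V) ∘L E) ∘L conjOp J ((adjoint V ∘L P₁ ∘L V) ∘L E) = 0 ∧
      Module.rank ℂ ↥(LinearMap.ker
          (((adjoint V ∘L P₁ ∘L V) ∘L E + conjOp J ((adjoint V ∘L P₁ ∘L V) ∘L E) : K →L[ℂ] K) : K →ₗ[ℂ] K)) +
          2 * Module.rank ℂ ↥(LinearMap.range (P₁ : K →ₗ[ℂ] K) ⊓ LinearMap.ker (adjoint V : K →ₗ[ℂ] K)) =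
        Module.rank ℂ ↥(LinearMap.ker (adjoint V : K →ₗ[ℂ] K)) := by

  classical
  set S : K →L[ℂ] K := adjoint V ∘L P₁ ∘L V with hSdef
  have hPsa' : star P₁ = P₁ := hPsa
  have hEsa' : star E = E := hEsa
  have hVV : adjoint V * V = 1 := hV
  have hPP : P₁ * P₁ = P₁ := hPidem
  have hEE : E * E = E := hEidem
  have hstarV : star V = adjoint V := star_eq_adjoint V
  have hstarVadj : star (adjoint V) = V := by rw [← hstarV, star_star]
  have hSmul : S = adjoint V * (P₁ * V) := rfl
  have hVc : conjOp J (adjoint V) = adjoint V := by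
    rw [← conjOp_adjoint J hJ, hVconj]
  have hSsa : star S = S := by
    rw [hSmul, star_mul, star_mul, hstarVadj, hPsa', hstarV, mul_assoc]
  -- the conjugate of S
  have hSb : conjOp J S = 1 - S := by
    rw [hSmul, conjOp_mul J hJ, conjOp_mul J hJ, hVc, hPconj, hVconj,
      sub_mul, one_mul, mul_sub, hVV]
  have hTrew : S ∘L conjOp J S = S - S * S := by
    rw [hSb]
    show S * (1 - S) = S - S * S
    noncomm_ring
  rw [hTrew] at hEran
  set T : K →L[ℂ] K := S - S * S with hTdef
  have hTsa : star T = T := by rw [hTdef, star_sub, star_mul, hSsa]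
  -- basic consequences of hEran
  have hTEx : ∀ x, T (E x) = 0 := by
    intro x
    have hx : E x ∈ LinearMap.range (E : K →ₗ[ℂ] K) := LinearMap.mem_range_self _ _
    rw [hEran] at hx
    exact hx
  have hfix : ∀ x, T x = 0 → E x = x := by
    intro x hx
    have hx' : x ∈ LinearMap.range (E : K →ₗ[ℂ] K) := by rw [hEran]; exact hx
    obtain ⟨y, rfl⟩ := hx'
    show E ((E : K →ₗ[ℂ] K) y) = (E : K →ₗ[ℂ] K) y
    simpa using DFunLike.congr_fun hEidem y
  have hTmulE : T * E = 0 := by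
    ext x
    simpa using hTEx x
  have hTS : T * S = S * T := by rw [hTdef]; noncomm_ring
  -- commutation
  have e1 : E * (S * E) = S * E := by
    ext x
    show E (S (E x)) = S (E x)
    apply hfix
    have : T (S (E x)) = (T * S) (E x) := rfl
    rw [this, hTS]
    show S (T (E x)) = 0
    rw [hTEx x, map_zero]
  have e2 : E * (S * E) = E * S := by
    have h := congrArg star e1
    simpa [star_mul, hSsa, hEsa', mul_assoc] using h
  have hcomm : S * E = E * S := e1.symm.trans e2
  have hSSE : S * S * E = S * E := by
    have h1 : (S - S * S) * E = 0 := by rw [← hTdef]; exact hTmulE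
    rw [sub_mul] at h1
    have := sub_eq_zero.mp h1
    exact this.symm
  have hidem : (S * E) * (S * E) = S * E := by
    rw [mul_assoc, e1, ← mul_assoc, hSSE]
  have hqsa : star (S * E) = S * E := by
    rw [star_mul, hEsa', hSsa, ← hcomm]
  -- conjugate of E
  have hTc : conjOp J T = T := by
    rw [hTdef, conjOp_sub, conjOp_mul J hJ, hSb]
    noncomm_ring
  have hTJ : ∀ x, T (J x) = J (T x) := by
    intro x
    have h := DFunLike.congr_fun hTc x
    have h' : J (T (J x)) = T x := h
    calc T (J x) = J (J (T (J x))) := (hJ _).symm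
      _ = J (T x) := by rw [h']
  have hEbar : conjOp J E = E := by
    have h1 : E * conjOp J E = conjOp J E := by
      ext x
      show E (J (E (J x))) = J (E (J x))
      apply hfix
      rw [hTJ, hTEx, map_zero]
    have h2 : conjOp J E * E = E := by
      ext x
      show J (E (J (E x))) = E x
      have hk : T (J (E x)) = 0 := by rw [hTJ, hTEx, map_zero]
      rw [hfix _ hk, hJ]
    have h3 : E * conjOp J E = E := by
      have h := congrArg star h2
      have hstarc : star (conjOp J E) = conjOp J E := by
        have : star (conjOp J E) = adjoint (conjOp J E) := star_eq_adjoint _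
        rw [this, conjOp_adjoint J hJ, ← star_eq_adjoint, hEsa']
      simpa [star_mul, hEsa', hstarc] using h
    rw [← h1, h3]
  have hqconj : conjOp J (S * E) = (1 - S) * E := by
    rw [conjOp_mul J hJ, hSb, hEbar]
  have hzero : (S * E) * conjOp J (S * E) = 0 := by
    have h0 : S * E * ((1 - S) * E) = S * (E * E) - S * (E * (S * E)) := by noncomm_ring
    rw [hqconj, h0, hEE, e1, ← mul_assoc, hSSE, sub_self]
  have hqsum : S ∘L E + conjOp J (S ∘L E) = E := by
    show S * E + conjOp J (S * E) = E
    rw [hqconj]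
    noncomm_ring
  refine ⟨hcomm, hidem, hqsa, hzero, ?_⟩
  -- dimension count
  rw [hqsum]
  have hVVapp : ∀ z, adjoint V (V z) = z := by
    intro z
    simpa using DFunLike.congr_fun hVV z
  set N : Submodule ℂ K := LinearMap.ker ((adjoint V : K →L[ℂ] K) : K →ₗ[ℂ] K) with hNdef
  set N₁ : Submodule ℂ K := LinearMap.range (P₁ : K →ₗ[ℂ] K) ⊓ N with hN₁def
  set N₂ : Submodule ℂ K := LinearMap.range ((1 - P₁ : K →L[ℂ] K) : K →ₗ[ℂ] K) ⊓ N with hN₂def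
  set Q : K →L[ℂ] K := 1 - V * adjoint V with hQdef
  set B : K →L[ℂ] K := (adjoint V * P₁) * Q with hBdef
  have hQsa : star Q = Q := by
    rw [hQdef]
    simp [star_sub, star_mul, hstarV, hstarVadj]
  have hQQ : Q * Q = Q := by
    have h1 : Q * Q = 1 - V * adjoint V - V * adjoint V + V * ((adjoint V * V) * adjoint V) := by
      rw [hQdef]; noncomm_ring
    rw [h1, hVV, one_mul, hQdef]
    noncomm_ring
  have hQapp : ∀ y, Q y = y - V (adjoint V y) := by
    intro y
    rw [hQdef]
    simp [ContinuousLinearMap.sub_apply, ContinuousLinearMap.mul_apply]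
  have hQrange : LinearMap.range (Q : K →ₗ[ℂ] K) = N := by
    ext x
    simp only [LinearMap.mem_ker, LinearMap.mem_range, hNdef]
    constructor
    · rintro ⟨y, rfl⟩
      show adjoint V (Q y) = 0
      rw [hQapp, map_sub, hVVapp, sub_self]
    · intro hx
      exact ⟨x, by show Q x = x; rw [hQapp, show adjoint V x = 0 from hx, map_zero, sub_zero]⟩
  have hadjB : star B = Q * (P₁ * V) := by
    rw [hBdef]
    simp [star_mul, hstarV, hstarVadj, hQsa, hPsa', mul_assoc]
  have hTB : T = B * star B := by
    have h1 : B * star B = (adjoint V * P₁) * ((Q * Q) * (P₁ * V)) := by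
      rw [hBdef, hadjB]; noncomm_ring
    have h2 : (adjoint V * P₁) * (Q * (P₁ * V)) =
        adjoint V * ((P₁ * P₁) * V) -
          (adjoint V * (P₁ * V)) * (adjoint V * (P₁ * V)) := by
      rw [hQdef]; noncomm_ring
    calc T = S - S * S := hTdef
      _ = adjoint V * ((P₁ * P₁) * V) -
            (adjoint V * (P₁ * V)) * (adjoint V * (P₁ * V)) := by
          rw [hPP, ← hSmul]
      _ = (adjoint V * P₁) * (Q * (P₁ * V)) := h2.symm
      _ = (adjoint V * P₁) * ((Q * Q) * (P₁ * V)) := by rw [hQQ]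
      _ = B * star B := h1.symm
  have hTsa' : adjoint T = T := by rw [← star_eq_adjoint]; exact hTsa
  have hEsaAdj : adjoint E = E := by rw [← star_eq_adjoint]; exact hEsa'
  have hBapp : ∀ y, T y = B ((star B) y) := by
    intro y
    rw [hTB]
    rfl
  have hrangeT : LinearMap.range (T : K →ₗ[ℂ] K) =
      Submodule.map (B : K →ₗ[ℂ] K) (LinearMap.range ((star B : K →L[ℂ] K) : K →ₗ[ℂ] K)) := by
    ext x
    simp only [LinearMap.mem_range, Submodule.mem_map]
    constructor
    · rintro ⟨y, rfl⟩
      exact ⟨(star B) y, ⟨y, rfl⟩, (hBapp y).symm⟩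
    · rintro ⟨z, ⟨y, rfl⟩, rfl⟩
      exact ⟨y, hBapp y⟩
  have hrangeBstar : LinearMap.range ((star B : K →L[ℂ] K) : K →ₗ[ℂ] K) ≤ N := by
    rintro x ⟨y, rfl⟩
    show adjoint V ((star B) y) = 0
    have h : (star B) y = Q ((P₁ * V) y) := by rw [hadjB]; rfl
    rw [h, hQapp, map_sub, hVVapp, sub_self]
  haveI hfinN : FiniteDimensional ℂ ↥N := hfin
  haveI hfinBstar : FiniteDimensional ℂ ↥(LinearMap.range ((star B : K →L[ℂ] K) : K →ₗ[ℂ] K)) :=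
    Submodule.finiteDimensional_of_le hrangeBstar
  have hrangeB : LinearMap.range (B : K →ₗ[ℂ] K) =
      Submodule.map ((adjoint V * P₁ : K →L[ℂ] K) : K →ₗ[ℂ] K) N := by
    ext x
    simp only [LinearMap.mem_range, Submodule.mem_map]
    constructor
    · rintro ⟨y, rfl⟩
      refine ⟨Q y, ?_, rfl⟩
      rw [← hQrange]
      exact ⟨y, rfl⟩
    · rintro ⟨z, hz, rfl⟩
      refine ⟨z, ?_⟩
      show B z = (adjoint V * P₁) z
      have hz' : Q z = z := by
        rw [hQapp, (by exact hz : adjoint V z = 0), map_zero, sub_zero]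
      show (adjoint V * P₁) (Q z) = (adjoint V * P₁) z
      rw [hz']
  haveI hfinB : FiniteDimensional ℂ ↥(LinearMap.range (B : K →ₗ[ℂ] K)) := by
    rw [hrangeB]; infer_instance
  haveI hfinT : FiniteDimensional ℂ ↥(LinearMap.range (T : K →ₗ[ℂ] K)) := by
    rw [hrangeT]; infer_instance
  have hkerE : LinearMap.ker (E : K →ₗ[ℂ] K) = LinearMap.range (T : K →ₗ[ℂ] K) := by
    rw [ker_eq_ortho hEsaAdj, hEran, ker_eq_ortho hTsa',
      Submodule.orthogonal_orthogonal]
  have hreq1 : Module.finrank ℂ ↥(LinearMap.range (T : K →ₗ[ℂ] K)) =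
      Module.finrank ℂ ↥(LinearMap.range ((star B : K →L[ℂ] K) : K →ₗ[ℂ] K)) := by
    rw [hrangeT]
    apply finrank_map_eq
    rintro x ⟨y, rfl⟩ hx
    show (star B) y = 0
    have h1 : ⟪(star B) y, (star B) y⟫ = 0 := by
      calc ⟪(star B) y, (star B) y⟫ = ⟪adjoint B y, (star B) y⟫ := by rw [star_eq_adjoint]
        _ = ⟪y, B ((star B) y)⟫ := adjoint_inner_left B ((star B) y) y
        _ = 0 := by rw [(by exact hx : B ((star B) y) = 0), inner_zero_right]
    exact inner_self_eq_zero.mp h1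
  have hreq2 : Module.finrank ℂ ↥(LinearMap.range ((star B : K →L[ℂ] K) : K →ₗ[ℂ] K)) =
      Module.finrank ℂ ↥(LinearMap.range (B : K →ₗ[ℂ] K)) := by
    haveI : FiniteDimensional ℂ ↥(LinearMap.range ((star (star B) : K →L[ℂ] K) : K →ₗ[ℂ] K)) := by
      rw [star_star]; exact hfinB
    refine le_antisymm (finrank_range_star_le B) ?_
    have h := finrank_range_star_le (star B)
    rwa [star_star] at h
  -- rank-nullity for the restriction of V* P₁ to N
  set φ : ↥N →ₗ[ℂ] K :=
    ((adjoint V * P₁ : K →L[ℂ] K) : K →ₗ[ℂ] K).comp N.subtype with hφdef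
  have hφrange : LinearMap.range φ = LinearMap.range (B : K →ₗ[ℂ] K) := by
    rw [hφdef, LinearMap.range_comp, Submodule.range_subtype, hrangeB]
  have hRN : Module.finrank ℂ ↥(LinearMap.range φ) + Module.finrank ℂ ↥(LinearMap.ker φ) =
      Module.finrank ℂ ↥N := LinearMap.finrank_range_add_finrank_ker φ
  set W : Submodule ℂ K := LinearMap.ker ((adjoint V * P₁ : K →L[ℂ] K) : K →ₗ[ℂ] K) ⊓ N with hWdef
  have hkerφ : Module.finrank ℂ ↥(LinearMap.ker φ) = Module.finrank ℂ ↥W := by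
    have h1 : LinearMap.ker φ = Submodule.comap N.subtype W := by
      rw [hφdef, LinearMap.ker_comp, hWdef]
      ext x
      simp only [Submodule.mem_comap, Submodule.mem_inf]
      exact ⟨fun h => ⟨h, x.2⟩, fun h => h.1⟩
    rw [h1]
    exact (Submodule.comapSubtypeEquivOfLe inf_le_right).finrank_eq
  have hP1fix : ∀ x, x ∈ LinearMap.range (P₁ : K →ₗ[ℂ] K) → P₁ x = x := by
    rintro x ⟨y, rfl⟩
    show P₁ (P₁ y) = P₁ y
    simpa using DFunLike.congr_fun hPidem y
  have hP2kill : ∀ x, x ∈ LinearMap.range ((1 - P₁ : K →L[ℂ] K) : K →ₗ[ℂ] K) → P₁ x = 0 := by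
    rintro x ⟨y, rfl⟩
    show P₁ ((1 - P₁) y) = 0
    have h1 : (1 - P₁ : K →L[ℂ] K) y = y - P₁ y := by
      simp [ContinuousLinearMap.sub_apply]
    rw [h1, map_sub, (by simpa using DFunLike.congr_fun hPidem y : P₁ (P₁ y) = P₁ y), sub_self]
  have hWsup : W = N₁ ⊔ N₂ := by
    apply le_antisymm
    · rintro x ⟨hx1, hx2⟩
      have hx1' : adjoint V (P₁ x) = 0 := hx1
      have hx2' : adjoint V x = 0 := hx2
      have hm1 : P₁ x ∈ N₁ := ⟨LinearMap.mem_range_self _ _, hx1'⟩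
      have hm2 : x - P₁ x ∈ N₂ := by
        refine ⟨⟨x, ?_⟩, ?_⟩
        · show x - P₁ x = x - P₁ x
          rfl
        · show adjoint V (x - P₁ x) = 0
          rw [map_sub, hx1', hx2', sub_self]
      have hx : x = P₁ x + (x - P₁ x) := by abel
      rw [hx]
      exact Submodule.add_mem_sup hm1 hm2
    · apply sup_le
      · rintro x ⟨hx1, hx2⟩
        refine ⟨?_, hx2⟩
        show adjoint V (P₁ x) = 0
        rw [hP1fix x hx1]
        exact hx2
      · rintro x ⟨hx1, hx2⟩
        refine ⟨?_, hx2⟩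
        show adjoint V (P₁ x) = 0
        rw [hP2kill x hx1, map_zero]
  have hdisj : N₁ ⊓ N₂ = ⊥ := by
    rw [eq_bot_iff]
    rintro x ⟨⟨hx1, -⟩, ⟨hx2, -⟩⟩
    have h1 : P₁ x = x := hP1fix x hx1
    have h2 : P₁ x = 0 := hP2kill x hx2
    have : x = 0 := by rw [← h1, h2]
    simpa using this
  haveI hfinN₁ : FiniteDimensional ℂ ↥N₁ := Submodule.finiteDimensional_of_le inf_le_right
  haveI hfinN₂ : FiniteDimensional ℂ ↥N₂ := Submodule.finiteDimensional_of_le inf_le_right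
  have hsup : Module.finrank ℂ ↥(N₁ ⊔ N₂) =
      Module.finrank ℂ ↥N₁ + Module.finrank ℂ ↥N₂ := by
    have h := Submodule.finrank_sup_add_finrank_inf_eq N₁ N₂
    rw [hdisj] at h
    simpa using h
  -- J exchanges N₁ and N₂
  have hJP1 : ∀ y, J (P₁ y) = (1 - P₁ : K →L[ℂ] K) (J y) := by
    intro y
    have h : J (P₁ (J (J y))) = (1 - P₁ : K →L[ℂ] K) (J y) := DFunLike.congr_fun hPconj (J y)
    rwa [hJ] at h
  have hJP2 : ∀ y, J ((1 - P₁ : K →L[ℂ] K) y) = P₁ (J y) := by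
    intro y
    have h1 : (1 - P₁ : K →L[ℂ] K) y = y - P₁ y := by
      simp [ContinuousLinearMap.sub_apply]
    rw [h1, map_sub, hJP1]
    have h2 : (1 - P₁ : K →L[ℂ] K) (J y) = J y - P₁ (J y) := by
      simp [ContinuousLinearMap.sub_apply]
    rw [h2]
    abel
  have hJV : ∀ y, adjoint V (J y) = J (adjoint V y) := by
    intro y
    calc adjoint V (J y) = J (J (adjoint V (J y))) := (hJ _).symm
      _ = J (adjoint V y) := by
          rw [show J (adjoint V (J y)) = adjoint V y from DFunLike.congr_fun hVc y]
  have hmem12 : ∀ x : K, x ∈ N₁ → J x ∈ N₂ := by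
    rintro x ⟨⟨y, rfl⟩, hx2⟩
    refine ⟨⟨J y, (hJP1 y).symm⟩, ?_⟩
    show adjoint V (J (P₁ y)) = 0
    rw [hJV, (by exact hx2 : adjoint V (P₁ y) = 0), map_zero]
  have hmem21 : ∀ x : K, x ∈ N₂ → J x ∈ N₁ := by
    rintro x ⟨⟨y, rfl⟩, hx2⟩
    refine ⟨⟨J y, (hJP2 y).symm⟩, ?_⟩
    show adjoint V (J ((1 - P₁ : K →L[ℂ] K) y)) = 0
    rw [hJV, (by exact hx2 : adjoint V ((1 - P₁ : K →L[ℂ] K) y) = 0), map_zero]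
  have hrank12 : Module.rank ℂ ↥N₁ = Module.rank ℂ ↥N₂ := by
    let i : ZeroHom ℂ ℂ := ⟨fun z => starRingEnd ℂ z, map_zero _⟩
    let j : ↥N₁ ≃+ ↥N₂ :=
      { toFun := fun x => ⟨J (x : K), hmem12 (x : K) x.2⟩
        invFun := fun y => ⟨J (y : K), hmem21 (y : K) y.2⟩
        left_inv := fun x => Subtype.ext (hJ (x : K))
        right_inv := fun y => Subtype.ext (hJ (y : K))
        map_add' := fun a b => Subtype.ext (map_add J (a : K) (b : K)) }
    refine rank_eq_of_equiv_equiv i j ?_ ?_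
    · exact Function.Involutive.bijective fun z => Complex.conj_conj z
    · intro r m
      refine Subtype.ext ?_
      show J ((r • m : ↥N₁) : K) = (starRingEnd ℂ) r • (J (m : K))
      rw [Submodule.coe_smul]
      exact LinearIsometryEquiv.map_smulₛₗ J r (m : K)
  have hfr12 : Module.finrank ℂ ↥N₂ = Module.finrank ℂ ↥N₁ := by
    have h : (Module.finrank ℂ ↥N₁ : Cardinal) = (Module.finrank ℂ ↥N₂ : Cardinal) := by
      rw [Module.finrank_eq_rank, Module.finrank_eq_rank, hrank12]
    exact_mod_cast h.symm
  have hnat : Module.finrank ℂ ↥(LinearMap.range (T : K →ₗ[ℂ] K)) + 2 * Module.finrank ℂ ↥N₁ =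
      Module.finrank ℂ ↥N := by
    rw [hφrange, hkerφ] at hRN
    have hwr : Module.finrank ℂ ↥W = 2 * Module.finrank ℂ ↥N₁ := by
      rw [hWsup, hsup, hfr12]
      omega
    rw [hwr] at hRN
    rw [hreq1, hreq2]
    omega
  rw [hkerE, ← Module.finrank_eq_rank ℂ, ← Module.finrank_eq_rank ℂ, ← Module.finrank_eq_rank ℂ]
  exact_mod_cast hnat
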